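/- Let a > 0, V > 0 and d ≥ 0, and define T(d) = 2·√(d/a) if d ≤ V²/a and T(d) = 2·V/a + (d − V²/a)/V if d > V²/a. Suppose S ≥ 0 and v : ℝ → ℝ satisfies: v(0) = 0, v(S) = 0, 0 ≤ v(t) ≤ V for all t ∈ [0, S], v is Lipschitz with constant a, and ∫₀ˢ v(t) dt = d. Then S ≥ T(d). That is, T(d) is the minimum time in which a vehicle with speed bound V and acceleration bound a can travel distance d starting and ending at rest. -/
import Mathlib

lemma integ_lin1 (a x y : ℝ) : ∫ t in x..y, a * t = a * ((y^2 - x^2)/2) := by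
  rw [intervalIntegral.integral_const_mul, integral_id]

lemma integ_lin2 (a S x y : ℝ) : ∫ t in x..y, a * (S - t)
    = a * (S * (y - x) - (y^2 - x^2)/2) := by
  have hid : IntervalIntegrable (fun t : ℝ => t) MeasureTheory.volume x y :=
    continuous_id.intervalIntegrable x y
  rw [intervalIntegral.integral_const_mul,
    intervalIntegral.integral_sub intervalIntegrable_const hid,
    intervalIntegral.integral_const, integral_id, smul_eq_mul]
  ring

/-- Minimality of the travel-time function: if a velocity profile `v` on `[0, S]`
starts and ends at rest, satisfies the speed bound `0 ≤ v ≤ V`, is Lipschitz with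
constant `a` (acceleration bound), and covers distance `d`, then
`S ≥ T(d)` where `T(d) = 2√(d/a)` if `d ≤ V²/a` and
`T(d) = 2V/a + (d - V²/a)/V` otherwise. -/
theorem travel_time_is_minimum (a V d : ℝ) (ha : 0 < a) (hV : 0 < V) (hd : 0 ≤ d)
    (S : ℝ) (v : ℝ → ℝ) (hS : 0 ≤ S)
    (hv0 : v 0 = 0) (hvS : v S = 0)
    (hbound : ∀ t ∈ Set.Icc (0 : ℝ) S, 0 ≤ v t ∧ v t ≤ V)
    (hlip : LipschitzWith a.toNNReal v)
    (hint : ∫ t in (0:ℝ)..S, v t = d) :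
    (if d ≤ V ^ 2 / a then 2 * Real.sqrt (d / a)
      else 2 * V / a + (d - V ^ 2 / a) / V) ≤ S := by
  have hvint : ∀ x y : ℝ, IntervalIntegrable v MeasureTheory.volume x y :=
    fun x y => hlip.continuous.intervalIntegrable x y
  have hca : (a.toNNReal : ℝ) = a := Real.coe_toNNReal a ha.le
  have hup : ∀ t ∈ Set.Icc (0:ℝ) S, v t ≤ a * t := by
    intro t ht
    have h := hlip.dist_le_mul t 0
    rw [hv0, hca, Real.dist_eq, Real.dist_eq, sub_zero, sub_zero,
      abs_of_nonneg ht.1] at h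
    exact (le_abs_self _).trans h
  have hdn : ∀ t ∈ Set.Icc (0:ℝ) S, v t ≤ a * (S - t) := by
    intro t ht
    have h := hlip.dist_le_mul t S
    rw [hvS, hca, Real.dist_eq, Real.dist_eq, sub_zero,
      abs_sub_comm, abs_of_nonneg (sub_nonneg.2 ht.2)] at h
    exact (le_abs_self _).trans h
  -- main quadratic bound: d ≤ a * S^2 / 4
  have hquad : d ≤ a * S^2 / 4 := by
    have hhalf : (0:ℝ) ≤ S/2 := by linarith
    have hsplit : d = (∫ t in (0:ℝ)..(S/2), v t) + ∫ t in (S/2)..S, v t := by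
      rw [← hint, intervalIntegral.integral_add_adjacent_intervals (hvint _ _) (hvint _ _)]
    have h1 : (∫ t in (0:ℝ)..(S/2), v t) ≤ ∫ t in (0:ℝ)..(S/2), a * t := by
      apply intervalIntegral.integral_mono_on hhalf (hvint _ _)
        ((continuous_const.mul continuous_id).intervalIntegrable _ _)
      intro t ht
      exact hup t ⟨ht.1, ht.2.trans (by linarith)⟩
    have h2 : (∫ t in (S/2)..S, v t) ≤ ∫ t in (S/2)..S, a * (S - t) := by
      apply intervalIntegral.integral_mono_on (by linarith) (hvint _ _)
        ((continuous_const.mul (continuous_const.sub continuous_id)).intervalIntegrable _ _)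
      intro t ht
      exact hdn t ⟨hhalf.trans ht.1, ht.2⟩
    rw [integ_lin1] at h1
    rw [integ_lin2] at h2
    nlinarith [hsplit, h1, h2]
  by_cases hc : d ≤ V ^ 2 / a
  · rw [if_pos hc]
    have h1 : d / a ≤ (S/2)^2 := by
      rw [div_le_iff₀ ha]
      nlinarith
    calc 2 * Real.sqrt (d / a) ≤ 2 * Real.sqrt ((S/2)^2) := by
          have := Real.sqrt_le_sqrt h1
          linarith
      _ = S := by rw [Real.sqrt_sq (by linarith)]; ring
  · rw [if_neg hc]
    push_neg at hc
    have hSgt : 2 * V / a < S := by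
      have hV2 : V^2 / a < a * S^2 / 4 := lt_of_lt_of_le hc hquad
      by_contra h
      push_neg at h
      have h' : S * a ≤ 2 * V := (le_div_iff₀ ha).mp h
      nlinarith [mul_le_mul h' h' (by positivity) (by positivity : (0:ℝ) ≤ 2*V),
        (div_lt_iff₀ ha).mp hV2]
    set t1 := V / a with ht1
    set t2 := S - V / a with ht2
    have ht1pos : 0 < t1 := div_pos hV ha
    have ht12 : t1 ≤ t2 := by
      rw [ht1, ht2]
      have h := hSgt
      rw [mul_div_assoc] at h
      linarith
    have ht2S : t2 ≤ S := by
      rw [ht2]; linarith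
    have hVle : ∀ t ∈ Set.Icc (0:ℝ) S, v t ≤ V := fun t ht => (hbound t ht).2
    have hsplit : d = (∫ t in (0:ℝ)..t1, v t) + (∫ t in t1..t2, v t)
        + ∫ t in t2..S, v t := by
      rw [← hint, intervalIntegral.integral_add_adjacent_intervals (hvint _ _) (hvint _ _),
        intervalIntegral.integral_add_adjacent_intervals (hvint _ _) (hvint _ _)]
    have h1 : (∫ t in (0:ℝ)..t1, v t) ≤ ∫ t in (0:ℝ)..t1, a * t := by
      apply intervalIntegral.integral_mono_on ht1pos.le (hvint _ _)
        ((continuous_const.mul continuous_id).intervalIntegrable _ _)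
      intro t ht
      exact hup t ⟨ht.1, le_trans ht.2 (le_trans ht12 ht2S)⟩
    have h2 : (∫ t in t1..t2, v t) ≤ ∫ t in t1..t2, V := by
      apply intervalIntegral.integral_mono_on ht12 (hvint _ _)
        (intervalIntegrable_const)
      intro t ht
      exact hVle t ⟨le_trans ht1pos.le ht.1, le_trans ht.2 ht2S⟩
    have h3 : (∫ t in t2..S, v t) ≤ ∫ t in t2..S, a * (S - t) := by
      apply intervalIntegral.integral_mono_on ht2S (hvint _ _)
        ((continuous_const.mul (continuous_const.sub continuous_id)).intervalIntegrable _ _)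
      intro t ht
      exact hdn t ⟨le_trans (le_trans ht1pos.le ht12) ht.1, ht.2⟩
    rw [integ_lin1] at h1
    rw [integ_lin2] at h3
    rw [intervalIntegral.integral_const, smul_eq_mul] at h2
    have hdle : d ≤ V * S - V^2 / a := by
      have key : a * ((t1^2 - 0^2)/2) + (t2 - t1) * V
          + a * (S * (S - t2) - (S^2 - t2^2)/2) = V * S - V^2 / a := by
        rw [ht1, ht2]; field_simp; ring
      clear_value t1 t2
      linarith [hsplit, h1, h2, h3, key]
    rw [div_add_div _ _ (ne_of_gt ha) (ne_of_gt hV), div_le_iff₀ (by positivity)]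
    have hcancel : V^2 / a * a = V^2 := div_mul_cancel₀ _ (ne_of_gt ha)
    nlinarith [mul_le_mul_of_nonneg_right hdle ha.le, hcancel]
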